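/- Let C, H, Λ, t_X, t_Y be real numbers and let x₀, y₀ be nonzero reals. Set A = −2C, let X(x,y,z) = (A x − H(((A−C)² + 1) z − Λ), Λ − (1+C²) z, 2C z + y) and Y(x,y,z) = (−Λ − (1+C²) z, A y − H(((A−C)² + 1) z + Λ), 2C z + x), with Jacobian matrices DX (rows (A,0,−H((A−C)²+1)), (0,0,−(1+C²)), (0,1,2C)) and DY (rows (0,0,−(1+C²)), (0,A,−H((A−C)²+1)), (1,0,2C)). Let p₀ = (x₀,y₀,0), p₁ = (−y₀,−x₀,0), and define the saltation matrices S_{X→Y}(p₁) = I + ((Y(p₁) − X(p₁))/X₃(p₁))·e₃ᵀ and S_{Y→X}(p₀) = I − ((Y(p₀) − X(p₀))/Y₃(p₀))·e₃ᵀ, where X₃, Y₃ denote the third components and e₃ = (0,0,1). Then the monodromy matrix M = S_{Y→X}(p₀)·exp(t_Y·DY)·S_{X→Y}(p₁)·exp(t_X·DX) satisfies det(M) = (y₀/x₀)². -/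

import Mathlib

/-!
The determinant is multiplicative, so det M is the product of four factors. Both Jacobians are
trace-free (this is where A = −2C enters), so by Liouville's formula
det exp(tA) = exp(t · tr A) the two flows contribute 1; Liouville's formula itself follows from
Jacobi's formula d/dt det E = ∑ⱼ det(E with column j replaced by (E A)ⱼ) = det E · tr A.
Each saltation matrix is a rank-one perturbation of the identity, so by the matrix determinant
lemma det(I ± u e₃ᵀ) = 1 ± u₃; this gives Y₃/X₃ at p₁ and X₃/Y₃ at p₀, which on Σ are
(−y₀)/(−x₀) and y₀/x₀.
-/

open Matrix

/-- The upper vector field X with A = −2C, as a function on Fin 3 → ℝ. -/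
noncomputable def Xv (C H Λ : ℝ) (p : Fin 3 → ℝ) : Fin 3 → ℝ :=
  ![(-2 * C) * p 0 - H * (((-2 * C - C) ^ 2 + 1) * p 2 - Λ),
    Λ - (1 + C ^ 2) * p 2,
    2 * C * p 2 + p 1]

/-- The lower vector field Y with A = −2C, as a function on Fin 3 → ℝ. -/
noncomputable def Yv (C H Λ : ℝ) (p : Fin 3 → ℝ) : Fin 3 → ℝ :=
  ![-Λ - (1 + C ^ 2) * p 2,
    (-2 * C) * p 1 - H * (((-2 * C - C) ^ 2 + 1) * p 2 + Λ),
    2 * C * p 2 + p 0]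

/-- The Jacobian of X with A = −2C. -/
noncomputable def DXmat (C H : ℝ) : Matrix (Fin 3) (Fin 3) ℝ :=
  !![-2 * C, 0, -H * ((-2 * C - C) ^ 2 + 1);
     0, 0, -(1 + C ^ 2);
     0, 1, 2 * C]

/-- The Jacobian of Y with A = −2C. -/
noncomputable def DYmat (C H : ℝ) : Matrix (Fin 3) (Fin 3) ℝ :=
  !![0, 0, -(1 + C ^ 2);
     0, -2 * C, -H * ((-2 * C - C) ^ 2 + 1);
     1, 0, 2 * C]

/-- The saltation matrix S_{X→Y} at a point p: I + ((Y−X)/X₃)·e₃ᵀ. -/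
noncomputable def saltXY (C H Λ : ℝ) (p : Fin 3 → ℝ) : Matrix (Fin 3) (Fin 3) ℝ :=
  1 + Matrix.vecMulVec (fun i => (Yv C H Λ p i - Xv C H Λ p i) / Xv C H Λ p 2) ![0, 0, 1]

/-- The saltation matrix S_{Y→X} at a point p: I − ((Y−X)/Y₃)·e₃ᵀ. -/
noncomputable def saltYX (C H Λ : ℝ) (p : Fin 3 → ℝ) : Matrix (Fin 3) (Fin 3) ℝ :=
  1 - Matrix.vecMulVec (fun i => (Yv C H Λ p i - Xv C H Λ p i) / Yv C H Λ p 2) ![0, 0, 1]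

open NormedSpace

namespace Matrix

theorem det_one_add_vecMulVec {m R : Type*} [Fintype m] [DecidableEq m] [CommRing R]
    (u v : m → R) : (1 + vecMulVec u v).det = 1 + v ⬝ᵥ u := by
  rw [vecMulVec_eq Unit, det_one_add_replicateCol_mul_replicateRow]

theorem det_one_sub_vecMulVec {m R : Type*} [Fintype m] [DecidableEq m] [CommRing R]
    (u v : m → R) : (1 - vecMulVec u v).det = 1 - v ⬝ᵥ u := by
  rw [sub_eq_add_neg, ← neg_vecMulVec, det_one_add_vecMulVec, dotProduct_neg, ← sub_eq_add_neg]

variable {n : Type*} [Fintype n] [DecidableEq n]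

theorem hasDerivAt_det {𝕜 : Type*} [NontriviallyNormedField 𝕜] {M : 𝕜 → Matrix n n 𝕜}
    {M' : Matrix n n 𝕜} {t : 𝕜} (hM : ∀ i j, HasDerivAt (fun s => M s i j) (M' i j) t) :
    HasDerivAt (fun s => (M s).det) (∑ j, ((M t).updateCol j fun i => M' i j).det) t := by
  have hterm (σ : Equiv.Perm n) :=
    (HasDerivAt.fun_finsetProd (u := Finset.univ) fun i _ => hM (σ i) i).const_mul
      ((Equiv.Perm.sign σ : ℤ) : 𝕜)
  have hdet : (fun s => (M s).det) = fun s => ∑ σ : Equiv.Perm n,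
      ((Equiv.Perm.sign σ : ℤ) : 𝕜) * ∏ i, M s (σ i) i := funext fun s => det_apply' (M s)
  rw [hdet]
  refine (HasDerivAt.fun_sum (u := Finset.univ) fun σ _ => hterm σ).congr_deriv ?_
  simp_rw [det_apply', Finset.mul_sum]
  rw [Finset.sum_comm]
  refine Finset.sum_congr rfl fun j _ => Finset.sum_congr rfl fun σ _ => ?_
  rw [← Finset.mul_prod_erase Finset.univ _ (Finset.mem_univ j), updateCol_self, smul_eq_mul,
    mul_comm (M' _ _), Finset.prod_congr rfl fun i hi => updateCol_ne (Finset.ne_of_mem_erase hi)]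

section Exp

attribute [local instance] Matrix.linftyOpNormedRing Matrix.linftyOpNormedAlgebra

theorem hasDerivAt_exp_smul_apply (A : Matrix n n ℝ) (t : ℝ) (i j : n) :
    HasDerivAt (fun s : ℝ => exp (s • A) i j) ((exp (t • A) * A) i j) t :=
  (LinearMap.toContinuousLinearMap (entryLinearMap ℝ ℝ i j)).hasFDerivAt.comp_hasDerivAt t
    (hasDerivAt_exp_smul_const A t)

theorem hasDerivAt_det_exp_smul (A : Matrix n n ℝ) (t : ℝ) :
    HasDerivAt (fun s : ℝ => (exp (s • A)).det) ((exp (t • A)).det * A.trace) t := by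
  refine (hasDerivAt_det (hasDerivAt_exp_smul_apply A t)).congr_deriv ?_
  have hcol (j : n) : (fun k => (exp (t • A) * A) k j) = fun k => ∑ i, A i j • exp (t • A) k i :=
    funext fun k => by simp only [mul_apply, smul_eq_mul, mul_comm]
  simp_rw [hcol, det_updateCol_sum, smul_eq_mul, trace, diag, Finset.mul_sum, mul_comm]

theorem det_exp_smul (A : Matrix n n ℝ) (t : ℝ) : (exp (t • A)).det = Real.exp (t * A.trace) := by
  set g : ℝ → ℝ := fun s => (exp (s • A)).det * Real.exp (-(s * A.trace))
  have hg (s : ℝ) : HasDerivAt g 0 s := by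
    have hexp := ((hasDerivAt_mul_const A.trace).neg).exp (x := s)
    refine ((hasDerivAt_det_exp_smul A s).mul hexp).congr_deriv ?_
    ring
  have hconst : g t = g 0 :=
    is_const_of_deriv_eq_zero (fun s => (hg s).differentiableAt) (fun s => (hg s).deriv) t 0
  simpa [g, exp_zero, Real.exp_neg, mul_inv_eq_iff_eq_mul₀ (Real.exp_pos _).ne'] using hconst

end Exp

end Matrix

theorem det_saltXY (C H Λ : ℝ) (p : Fin 3 → ℝ) (hp : Xv C H Λ p 2 ≠ 0) :
    (saltXY C H Λ p).det = Yv C H Λ p 2 / Xv C H Λ p 2 := by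
  rw [saltXY, det_one_add_vecMulVec, dotProduct, Fin.sum_univ_three]
  simp only [Fin.isValue, cons_val_zero, cons_val_one, cons_val, zero_mul, one_mul, zero_add]
  rw [sub_div, div_self hp, add_sub_cancel]

theorem det_saltYX (C H Λ : ℝ) (p : Fin 3 → ℝ) (hp : Yv C H Λ p 2 ≠ 0) :
    (saltYX C H Λ p).det = Xv C H Λ p 2 / Yv C H Λ p 2 := by
  rw [saltYX, det_one_sub_vecMulVec, dotProduct, Fin.sum_univ_three]
  simp only [Fin.isValue, cons_val_zero, cons_val_one, cons_val, zero_mul, one_mul, zero_add]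
  rw [sub_div, div_self hp, sub_sub_cancel]

theorem Xv_two_switchingPlane (C H Λ x y : ℝ) : Xv C H Λ ![x, y, 0] 2 = y := by
  simp [Xv]

theorem Yv_two_switchingPlane (C H Λ x y : ℝ) : Yv C H Λ ![x, y, 0] 2 = x := by
  simp [Yv]

theorem trace_DXmat (C H : ℝ) : (DXmat C H).trace = 0 := by
  simp [DXmat, trace_fin_three]

theorem trace_DYmat (C H : ℝ) : (DYmat C H).trace = 0 := by
  simp [DYmat, trace_fin_three]

theorem monodromy_det_general (C H Λ t_X t_Y x₀ y₀ : ℝ) (hx₀ : x₀ ≠ 0) :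
    (saltYX C H Λ ![x₀, y₀, 0] * NormedSpace.exp (t_Y • DYmat C H) *
        saltXY C H Λ ![-y₀, -x₀, 0] * NormedSpace.exp (t_X • DXmat C H)).det =
      (y₀ / x₀) ^ 2 := by
  rw [det_mul, det_mul, det_mul, det_exp_smul, det_exp_smul, trace_DXmat, trace_DYmat, det_saltXY,
    det_saltYX, Xv_two_switchingPlane, Yv_two_switchingPlane, Xv_two_switchingPlane,
    Yv_two_switchingPlane, neg_div_neg_eq]
  · simp only [mul_zero, Real.exp_zero, mul_one]
    ring
  · rwa [Yv_two_switchingPlane]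
  · rwa [Xv_two_switchingPlane, neg_ne_zero]

/-- The saltation-corrected monodromy matrix of the symmetric cycle has
determinant (y₀/x₀)². -/
theorem monodromy_det (C H Λ t_X t_Y x₀ y₀ : ℝ) (hx₀ : x₀ ≠ 0) (hy₀ : y₀ ≠ 0) :
    (saltYX C H Λ ![x₀, y₀, 0] * NormedSpace.exp (t_Y • DYmat C H) *
        saltXY C H Λ ![-y₀, -x₀, 0] * NormedSpace.exp (t_X • DXmat C H)).det =
      (y₀ / x₀) ^ 2 :=
  monodromy_det_general C H Λ t_X t_Y x₀ y₀ hx₀
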